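/- Let A be a unital complex Banach algebra, f, i, D, I ∈ A, M = T(f,i) = ![![f, 0], ![i, f]] and P = T(D,I) = ![![D, 0], ![I, D]] in Matrix (Fin 2) (Fin 2) A. Set x = ∑'_{n : ℕ} ((n+1)! : ℂ)⁻¹ • (∑_{k=0}^{n} f^k * i * f^{n−k}). Then exp(M) * P * exp(−M) = ![![exp f * D * exp(−f), 0], ![exp f * I * exp(−f) − ⁅exp f * D * exp(−f), x * exp(−f)⁆, exp f * D * exp(−f)]]. (This is the explicit form of the gauge action e^{ad M}(P) = e^M P e^{−M} in the matrix model; note the sign of the commutator term.) -/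

import Mathlib

/-!
The matrices `T a b` form a subring of `Matrix (Fin 2) (Fin 2) A` in which
`T a b * T c d = T (a * c) (b * c + a * d)`, so `T a b ^ n` has diagonal `a ^ n` and off-diagonal
entry `∑ a ^ k * b * a ^ (n - 1 - k)`. Summing the exponential series entrywise gives
`exp (T f i) = T (exp f) x`, and likewise `exp (-T f i) = T (exp (-f)) z` for some `z`. Since
these two matrices are mutually inverse, `z = -(exp (-f) * x * exp (-f))`, and multiplying out
`T (exp f) x * T D I * T (exp (-f)) z` gives the claimed matrix.
-/

open NormedSpace

def T {A : Type*} [Ring A] (a b : A) : Matrix (Fin 2) (Fin 2) A :=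
  ![![a, 0], ![b, a]]

section Ring

variable {A : Type*} [Ring A]

theorem T_eq_of (a b : A) : T a b = !![a, 0; b, a] := rfl

theorem T_mul_T (a b c d : A) : T a b * T c d = T (a * c) (b * c + a * d) := by
  simp [T_eq_of]

theorem T_one_zero : T (1 : A) 0 = 1 := by
  simp [T_eq_of, Matrix.one_fin_two]

theorem T_eq_one_iff {a b : A} : T a b = 1 ↔ a = 1 ∧ b = 0 := by
  rw [← T_one_zero]
  simp +contextual [T_eq_of]

theorem neg_T (a b : A) : -T a b = T (-a) (-b) := by
  simp [T_eq_of]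

theorem smul_T {R : Type*} [SMulZeroClass R A] (c : R) (a b : A) :
    c • T a b = T (c • a) (c • b) := by
  simp [T_eq_of]

theorem T_pow (a b : A) (n : ℕ) :
    T a b ^ n = T (a ^ n) (∑ k ∈ Finset.range n, a ^ k * b * a ^ (n - 1 - k)) := by
  induction n with
  | zero => simp [T_one_zero]
  | succ n ih =>
    rw [pow_succ', ih, T_mul_T, ← pow_succ', Finset.sum_range_succ', Finset.mul_sum,
      add_comm (∑ _ ∈ _, _)]
    congr 2
    · simp
    · refine Finset.sum_congr rfl fun k _ => ?_
      rw [pow_succ', Nat.add_sub_cancel, Nat.sub_sub, add_comm 1 k, mul_assoc, mul_assoc,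
        mul_assoc]

theorem T_mul_T_mul_T_of_mul_eq_one {e x e' z : A} (h₁ : T e x * T e' z = 1)
    (h₂ : T e' z * T e x = 1) (D I : A) :
    T e x * T D I * T e' z = T (e * D * e') (e * I * e' - ⁅e * D * e', x * e'⁆) := by
  rw [T_mul_T, T_eq_one_iff] at h₁ h₂
  obtain ⟨hee', -⟩ := h₁
  obtain ⟨he'e, hz⟩ := h₂
  have hz' : z = -(e' * x * e') :=
    calc z = (z * e + e' * x) * e' - e' * x * e' := by
          rw [add_mul, mul_assoc z, hee', mul_one, add_sub_cancel_right]
      _ = -(e' * x * e') := by rw [hz, zero_mul, zero_sub]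
  have hx : x * e' * (e * D * e') = x * D * e' :=
    calc x * e' * (e * D * e') = x * (e' * e) * D * e' := by noncomm_ring
      _ = x * D * e' := by rw [he'e, mul_one]
  rw [T_mul_T, T_mul_T, hz', Ring.lie_def, hx]
  congr 1
  noncomm_ring

end Ring

theorem hasSum_T {ι A : Type*} [Ring A] [TopologicalSpace A] {u v : ι → A} {a b : A}
    (hu : HasSum u a) (hv : HasSum v b) : HasSum (fun n => T (u n) (v n)) (T a b) := by
  refine Pi.hasSum.2 fun i => Pi.hasSum.2 fun j => ?_
  fin_cases i <;> fin_cases j <;> simp [T, hu, hv]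

section Banach

variable {B : Type*} [NormedRing B] [CompleteSpace B]

theorem NormedSpace.exp_mul_exp_neg (𝕂 : Type*) [RCLike 𝕂] [NormedAlgebra 𝕂 B] (x : B) :
    exp x * exp (-x) = 1 := by
  let : NormedAlgebra ℚ B := NormedAlgebra.restrictScalars ℚ 𝕂 B
  let := invertibleExp x
  rw [← invOf_exp, mul_invOf_self]

theorem NormedSpace.exp_neg_mul_exp (𝕂 : Type*) [RCLike 𝕂] [NormedAlgebra 𝕂 B] (x : B) :
    exp (-x) * exp x = 1 := by
  let : NormedAlgebra ℚ B := NormedAlgebra.restrictScalars ℚ 𝕂 B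
  let := invertibleExp x
  rw [← invOf_exp, invOf_mul_self]

end Banach

namespace Matrix

variable {m A : Type*} [Fintype m] [DecidableEq m] [NormedRing A] [CompleteSpace A]

open scoped Norms.Operator

/- Instance search does not see through the operator-norm uniformity to the product one. -/
theorem completeSpace_linftyOp :
    @CompleteSpace (Matrix m m A) PseudoMetricSpace.toUniformSpace :=
  inferInstanceAs (CompleteSpace (m → m → A))

attribute [local instance] completeSpace_linftyOp

theorem exp_series_hasSum_exp' {𝕂 : Type*} [RCLike 𝕂] [NormedAlgebra 𝕂 A] (M : Matrix m m A) :
    HasSum (fun n => (n.factorial⁻¹ : 𝕂) • M ^ n) (exp M) :=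
  NormedSpace.exp_series_hasSum_exp' M

theorem exp_mul_exp_neg (𝕂 : Type*) [RCLike 𝕂] [NormedAlgebra 𝕂 A] (M : Matrix m m A) :
    exp M * exp (-M) = 1 :=
  NormedSpace.exp_mul_exp_neg 𝕂 M

theorem exp_neg_mul_exp (𝕂 : Type*) [RCLike 𝕂] [NormedAlgebra 𝕂 A] (M : Matrix m m A) :
    exp (-M) * exp M = 1 :=
  NormedSpace.exp_neg_mul_exp 𝕂 M

end Matrix

theorem exp_T (𝕂 : Type*) [RCLike 𝕂] {A : Type*} [NormedRing A] [NormedAlgebra 𝕂 A]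
    [CompleteSpace A] (a b : A) :
    exp (T a b) = T (exp a) (∑' n : ℕ, (((n + 1).factorial : 𝕂))⁻¹ •
      ∑ k ∈ Finset.range (n + 1), a ^ k * b * a ^ (n - k)) := by
  have hM : HasSum (fun n => T ((n.factorial⁻¹ : 𝕂) • a ^ n)
      ((n.factorial⁻¹ : 𝕂) • ∑ k ∈ Finset.range n, a ^ k * b * a ^ (n - 1 - k)))
      (exp (T a b)) := by
    simpa only [T_pow, smul_T] using Matrix.exp_series_hasSum_exp' (𝕂 := 𝕂) (T a b)
  have hsnd : HasSum (fun n => (n.factorial⁻¹ : 𝕂) •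
      ∑ k ∈ Finset.range n, a ^ k * b * a ^ (n - 1 - k)) (exp (T a b) 1 0) :=
    Pi.hasSum.1 (Pi.hasSum.1 hM 1) 0
  have hsnd_succ : HasSum (fun n : ℕ => (((n + 1).factorial : 𝕂))⁻¹ •
      ∑ k ∈ Finset.range (n + 1), a ^ k * b * a ^ (n - k)) (exp (T a b) 1 0) := by
    simpa using (hasSum_nat_add_iff' 1).2 hsnd
  rw [hM.unique (hasSum_T (exp_series_hasSum_exp' a) hsnd), hsnd_succ.tsum_eq]

/-- The gauge action in the matrix model: with `M = T f i`, `P = T D I` and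
`x = ∑'_{n} ((n+1)!)⁻¹ • (∑_{k=0}^{n} f^k * i * f^(n-k))`, one has
`exp M * P * exp (-M) = ![![eᶠDe⁻ᶠ, 0], ![eᶠIe⁻ᶠ - ⁅eᶠDe⁻ᶠ, x·e⁻ᶠ⁆, eᶠDe⁻ᶠ]]`. -/
theorem stmt4 {A : Type*} [NormedRing A] [NormedAlgebra ℂ A] [CompleteSpace A]
    (f i D I : A) :
    exp (T f i) * T D I * exp (-(T f i)) =
      let x : A := ∑' n : ℕ, (((n + 1).factorial : ℂ))⁻¹ •
          ∑ k ∈ Finset.range (n + 1), f ^ k * i * f ^ (n - k)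
      ![![exp f * D * exp (-f), 0],
        ![exp f * I * exp (-f) - ⁅exp f * D * exp (-f), x * exp (-f)⁆,
          exp f * D * exp (-f)]] := by
  have h₁ := Matrix.exp_mul_exp_neg ℂ (T f i)
  have h₂ := Matrix.exp_neg_mul_exp ℂ (T f i)
  rw [neg_T, exp_T ℂ, exp_T ℂ] at h₁ h₂ ⊢
  exact T_mul_T_mul_T_of_mul_eq_one h₁ h₂ D I
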